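/- arXiv:1507.07349 — 5 statements merged into one kernel-verified Lean document; each statement's English description precedes it below -/
import Mathlib

section
/- Let X be a Fréchet space with increasing generating seminorms (p_i), d the associated translation-invariant metric, and let H and H_i denote the Hausdorff (semi)distances on nonempty closed bounded convex subsets associated with d and p_i respectively. A multifunction Γ: [0,1] → cb(X) is Bochner measurable (i.e., there is a sequence of simple multifunctions Γ_n with H(Γ_n(t),Γ(t)) → 0 for a.e. t) if and only if it is totally measurable (i.e., there is a sequence of simple multifunctions Γ_n such that for every i ∈ ℕ, H_i(Γ_n(t),Γ(t)) → 0 for a.e. t). -/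
open MeasureTheory Set Filter Topology Pointwise

noncomputable section

variable {X : Type*} [AddCommGroup X] [Module ℝ X] [UniformSpace X]
  [IsUniformAddGroup X] [ContinuousSMul ℝ X] [CompleteSpace X]

/-- The translation-invariant metric `d(x,y) = ∑_{i=1}^∞ 2^{-i} p_i(x-y)/(1+p_i(x-y))`
built from the sequence of seminorms (indexed from 1). -/
def frechetDist (p : ℕ → Seminorm ℝ X) (x y : X) : ℝ :=
  ∑' i : ℕ, (p (i + 1) (x - y) / (1 + p (i + 1) (x - y))) / 2 ^ (i + 1)

/-- The excess `e(A,B) = sup_{a ∈ A} inf_{b ∈ B} ρ a b` of `A` over `B`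
with respect to a distance-like function `ρ`. -/
def excess (ρ : X → X → ℝ) (A B : Set X) : ℝ :=
  sSup ((fun a => sInf ((fun b => ρ a b) '' B)) '' A)

/-- Hausdorff (semi)distance associated with a distance-like function. -/
def hDist (ρ : X → X → ℝ) (A B : Set X) : ℝ := max (excess ρ A B) (excess ρ B A)

/-- The (semi)distance associated to a seminorm. -/
def semiDist (q : Seminorm ℝ X) (x y : X) : ℝ := q (x - y)

/-- Membership in `cb(X)`: nonempty closed bounded convex subsets of `X`. -/
def IsCB (A : Set X) : Prop :=
  A.Nonempty ∧ IsClosed A ∧ Bornology.IsVonNBounded ℝ A ∧ Convex ℝ A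

/-- Membership in `ck(X)`: nonempty compact convex subsets of `X`. -/
def IsCK (A : Set X) : Prop := A.Nonempty ∧ IsCompact A ∧ Convex ℝ A

/-- A simple multifunction: finitely many values, each attained on a Lebesgue measurable set. -/
def IsSimpleMF (Γ : ℝ → Set X) : Prop :=
  (Set.range Γ).Finite ∧ ∀ C : Set X, MeasurableSet {t | Γ t = C}

/-- The support function `σ(x*, C) = sup_{x ∈ C} ⟨x*, x⟩`. -/
def suppFn (f : X → ℝ) (C : Set X) : ℝ := sSup (f '' C)

open Classical in
/-- Integral of a simple multifunction: `∫_E Γ = ∑_C μ(E ∩ Γ⁻¹{C}) • C` (Minkowski sum). -/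
def simpleIntegral (Γ : ℝ → Set X) (E : Set ℝ) : Set X :=
  if h : (Set.range Γ).Finite then
    ∑ C ∈ h.toFinset, (volume (E ∩ {t | Γ t = C})).toReal • C
  else ∅

/-- The polar of the unit semiball `U = {x : q x ≤ 1}` inside the topological dual. -/
def polarSet (q : Seminorm ℝ X) : Set (X →L[ℝ] ℝ) := {f | ∀ x : X, q x ≤ 1 → |f x| ≤ 1}


end

noncomputable section

variable {X : Type*} [AddCommGroup X] [Module ℝ X] [UniformSpace X]
  [IsUniformAddGroup X] [ContinuousSMul ℝ X] [CompleteSpace X]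

/-- Lebesgue measure on `[0,1]`. -/
def μ01 : MeasureTheory.Measure ℝ := volume.restrict (Set.Icc 0 1)

/-- Bochner measurability of a multifunction with values satisfying `V`:
a.e. approximation by simple multifunctions in the Hausdorff metric of `frechetDist p`. -/
def BochnerMeasMF (p : ℕ → Seminorm ℝ X) (V : Set X → Prop) (Γ : ℝ → Set X) : Prop :=
  ∃ Γₙ : ℕ → ℝ → Set X, (∀ n, IsSimpleMF (Γₙ n) ∧ ∀ t, V (Γₙ n t)) ∧
    ∀ᵐ t ∂μ01, Tendsto (fun n => hDist (frechetDist p) (Γₙ n t) (Γ t)) atTop (𝓝 0)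

/-- Total measurability: a single sequence of simple multifunctions converging a.e.
in every Hausdorff semimetric `H_i`. -/
def TotallyMeasMF (p : ℕ → Seminorm ℝ X) (V : Set X → Prop) (Γ : ℝ → Set X) : Prop :=
  ∃ Γₙ : ℕ → ℝ → Set X, (∀ n, IsSimpleMF (Γₙ n) ∧ ∀ t, V (Γₙ n t)) ∧
    ∀ i : ℕ, ∀ᵐ t ∂μ01, Tendsto (fun n => hDist (semiDist (p i)) (Γₙ n t) (Γ t)) atTop (𝓝 0)

/-- Measurability by seminorm: for every `i` there is a sequence of simple multifunctions
(depending on `i`) converging a.e. in `H_i`. -/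
def SeminormMeasMF (p : ℕ → Seminorm ℝ X) (V : Set X → Prop) (Γ : ℝ → Set X) : Prop :=
  ∀ i : ℕ, ∃ Γₙ : ℕ → ℝ → Set X, (∀ n, IsSimpleMF (Γₙ n) ∧ ∀ t, V (Γₙ n t)) ∧
    ∀ᵐ t ∂μ01, Tendsto (fun n => hDist (semiDist (p i)) (Γₙ n t) (Γ t)) atTop (𝓝 0)

/-- Pettis integrability in `ck(X)`: the support functions are integrable and over each
measurable `E ⊆ [0,1]` there is a compact convex set whose support function is the
integral of the support functions. -/
def PettisIntegrableCK (Γ : ℝ → Set X) : Prop :=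
  (∀ x' : X →L[ℝ] ℝ, MeasureTheory.IntegrableOn
      (fun t => suppFn (⇑x') (Γ t)) (Set.Icc 0 1) volume) ∧
  ∀ E ⊆ Set.Icc (0:ℝ) 1, MeasurableSet E → ∃ C : Set X, IsCK C ∧
    ∀ x' : X →L[ℝ] ℝ, suppFn (⇑x') C = ∫ t in E, suppFn (⇑x') (Γ t)

/-- `Γ` is integrable with integral assignment `I`: it is totally measurable via a sequence
of `ck(X)`-valued simple multifunctions which is Cauchy in mean for every `H_i`, and for each
measurable `E ⊆ [0,1]` the integrals of the simple multifunctions converge in each `H_i` to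
the compact convex set `I E`. -/
def HasIntegralMF (p : ℕ → Seminorm ℝ X) (Γ : ℝ → Set X) (I : Set ℝ → Set X) : Prop :=
  ∃ Γₙ : ℕ → ℝ → Set X,
    (∀ n, IsSimpleMF (Γₙ n) ∧ ∀ t, IsCK (Γₙ n t)) ∧
    (∀ i : ℕ, ∀ᵐ t ∂μ01,
      Tendsto (fun n => hDist (semiDist (p i)) (Γₙ n t) (Γ t)) atTop (𝓝 0)) ∧
    (∀ i : ℕ, ∀ ε > (0:ℝ), ∃ N, ∀ n ≥ N, ∀ m ≥ N,
      ∫ t in Set.Icc (0:ℝ) 1, hDist (semiDist (p i)) (Γₙ n t) (Γₙ m t) < ε) ∧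
    (∀ E ⊆ Set.Icc (0:ℝ) 1, MeasurableSet E → IsCK (I E) ∧
      ∀ i : ℕ, Tendsto (fun n => hDist (semiDist (p i)) (simpleIntegral (Γₙ n) E) (I E))
        atTop (𝓝 0))

/-- `Γ` is integrable by seminorm (p-integrable) with integral assignment `I`. -/
def HasPIntegralMF (p : ℕ → Seminorm ℝ X) (Γ : ℝ → Set X) (I : Set ℝ → Set X) : Prop :=
  ∀ i : ℕ, ∃ Γₙ : ℕ → ℝ → Set X,
    (∀ n, IsSimpleMF (Γₙ n) ∧ ∀ t, IsCK (Γₙ n t)) ∧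
    (∀ᵐ t ∂μ01, Tendsto (fun n => hDist (semiDist (p i)) (Γₙ n t) (Γ t)) atTop (𝓝 0)) ∧
    (∀ n, MeasureTheory.IntegrableOn
      (fun t => hDist (semiDist (p i)) (Γₙ n t) (Γ t)) (Set.Icc 0 1) volume) ∧
    MeasureTheory.TendstoInMeasure μ01
      (fun n t => hDist (semiDist (p i)) (Γₙ n t) (Γ t)) atTop (fun _ => (0:ℝ)) ∧
    (∀ E ⊆ Set.Icc (0:ℝ) 1, MeasurableSet E →
      Tendsto (fun n => ∫ t in E, hDist (semiDist (p i)) (Γₙ n t) (Γ t)) atTop (𝓝 0) ∧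
      (IsCK (I E) ∧
        Tendsto (fun n => hDist (semiDist (p i)) (simpleIntegral (Γₙ n) E) (I E))
          atTop (𝓝 0)))

end

/-!
The metric `d` and the seminorms are comparable in both directions:
`p i (x - y) / (1 + p i (x - y)) / 2 ^ (i + 1) ≤ d x y` because `p` is monotone, and
`d x y ≤ p N (x - y) + (1 / 2) ^ N`, the first `N` terms being bounded by `p N` and the tail by a
geometric series. Both comparisons pass to excesses, hence to Hausdorff distances, between
nonempty sets (the second one needs bounded sets, where the excesses are genuine suprema rather
than the junk value `0`), so one and the same sequence of simple multifunctions witnesses both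
kinds of measurability.
-/

section Excess

variable {α : Type*} {ρ σ : α → α → ℝ} {A B : Set α}

lemma bddBelow_image_of_nonneg (hρ : ∀ x y, 0 ≤ ρ x y) (a : α) (B : Set α) :
    BddBelow ((fun b => ρ a b) '' B) :=
  ⟨0, by rintro _ ⟨b, -, rfl⟩; exact hρ a b⟩

lemma excess_nonneg (hρ : ∀ x y, 0 ≤ ρ x y) (A B : Set α) : 0 ≤ excess ρ A B :=
  Real.sSup_nonneg <| by
    rintro _ ⟨a, -, rfl⟩
    exact Real.sInf_nonneg (by rintro _ ⟨b, -, rfl⟩; exact hρ a b)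

lemma hDist_nonneg (hρ : ∀ x y, 0 ≤ ρ x y) (A B : Set α) : 0 ≤ hDist ρ A B :=
  le_max_of_le_left (excess_nonneg hρ A B)

lemma sInf_image_le_excess (hρ : ∀ x y, 0 ≤ ρ x y) (hB : B.Nonempty)
    (hbdd : ∃ C, ∀ a ∈ A, ∀ b ∈ B, ρ a b ≤ C) {a : α} (ha : a ∈ A) :
    sInf ((fun b => ρ a b) '' B) ≤ excess ρ A B := by
  obtain ⟨C, hC⟩ := hbdd
  obtain ⟨b₀, hb₀⟩ := hB
  refine le_csSup ⟨C, ?_⟩ ⟨a, ha, rfl⟩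
  rintro _ ⟨a', ha', rfl⟩
  exact (csInf_le (bddBelow_image_of_nonneg hρ a' B) ⟨b₀, hb₀, rfl⟩).trans (hC a' ha' b₀ hb₀)

lemma excess_le_of_lt_imp_lt {C δ ε : ℝ} (hρ : ∀ x y, 0 ≤ ρ x y) (hσ : ∀ x y, 0 ≤ σ x y)
    (hσC : ∀ x y, σ x y ≤ C) (hε : 0 ≤ ε) (hB : B.Nonempty)
    (hσρ : ∀ x y, σ x y < δ → ρ x y < ε) (h : excess σ A B < δ) : excess ρ A B ≤ ε := by
  refine Real.sSup_le ?_ hε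
  rintro _ ⟨a, ha, rfl⟩
  have hinf := sInf_image_le_excess hσ hB ⟨C, fun a _ b _ => hσC a b⟩ ha
  obtain ⟨_, ⟨b, hb, rfl⟩, hab⟩ := exists_lt_of_csInf_lt (hB.image _) (hinf.trans_lt h)
  exact (csInf_le (bddBelow_image_of_nonneg hρ a B) ⟨b, hb, rfl⟩).trans (hσρ a b hab).le

lemma excess_le_add_of_le_add {c : ℝ} (hρ : ∀ x y, 0 ≤ ρ x y) (hσ : ∀ x y, 0 ≤ σ x y)
    (hc : 0 ≤ c) (hB : B.Nonempty) (hbdd : ∃ C, ∀ a ∈ A, ∀ b ∈ B, ρ a b ≤ C)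
    (hσρ : ∀ x y, σ x y ≤ ρ x y + c) : excess σ A B ≤ excess ρ A B + c := by
  refine Real.sSup_le ?_ (add_nonneg (excess_nonneg hρ A B) hc)
  rintro _ ⟨a, ha, rfl⟩
  have hinf : sInf ((fun b => σ a b) '' B) - c ≤ sInf ((fun b => ρ a b) '' B) := by
    refine le_csInf (hB.image _) ?_
    rintro _ ⟨b, hb, rfl⟩
    have := csInf_le (bddBelow_image_of_nonneg hσ a B) ⟨b, hb, rfl⟩
    linarith [hσρ a b]
  linarith [sInf_image_le_excess hρ hB hbdd ha]

lemma hDist_le_of_lt_imp_lt {C δ ε : ℝ} (hρ : ∀ x y, 0 ≤ ρ x y) (hσ : ∀ x y, 0 ≤ σ x y)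
    (hσC : ∀ x y, σ x y ≤ C) (hε : 0 ≤ ε) (hA : A.Nonempty) (hB : B.Nonempty)
    (hσρ : ∀ x y, σ x y < δ → ρ x y < ε) (h : hDist σ A B < δ) : hDist ρ A B ≤ ε :=
  max_le (excess_le_of_lt_imp_lt hρ hσ hσC hε hB hσρ ((le_max_left _ _).trans_lt h))
    (excess_le_of_lt_imp_lt hρ hσ hσC hε hA hσρ ((le_max_right _ _).trans_lt h))

lemma hDist_le_add_of_le_add {c : ℝ} (hρ : ∀ x y, 0 ≤ ρ x y) (hσ : ∀ x y, 0 ≤ σ x y)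
    (hc : 0 ≤ c) (hA : A.Nonempty) (hB : B.Nonempty)
    (hAB : ∃ C, ∀ a ∈ A, ∀ b ∈ B, ρ a b ≤ C) (hBA : ∃ C, ∀ b ∈ B, ∀ a ∈ A, ρ b a ≤ C)
    (hσρ : ∀ x y, σ x y ≤ ρ x y + c) : hDist σ A B ≤ hDist ρ A B + c :=
  max_le
    ((excess_le_add_of_le_add hρ hσ hc hB hAB hσρ).trans
      ((add_le_add_iff_right c).2 (le_max_left _ _)))
    ((excess_le_add_of_le_add hρ hσ hc hA hBA hσρ).trans
      ((add_le_add_iff_right c).2 (le_max_right _ _)))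

end Excess

lemma div_one_add_le_one {a : ℝ} (ha : 0 ≤ a) : a / (1 + a) ≤ 1 := by
  rw [div_le_one (by linarith)]; linarith

lemma div_one_add_le_self {a : ℝ} (ha : 0 ≤ a) : a / (1 + a) ≤ a := by
  rw [div_le_iff₀ (by linarith)]; nlinarith

lemma div_one_add_le_div_one_add {a b : ℝ} (ha : 0 ≤ a) (hab : a ≤ b) :
    a / (1 + a) ≤ b / (1 + b) := by
  rw [div_le_div_iff₀ (by linarith) (by linarith)]; nlinarith

lemma summable_div_two_pow_succ (a : ℝ) : Summable fun i : ℕ => a / 2 ^ (i + 1) := by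
  simpa only [pow_succ', ← div_div] using summable_geometric_two' a

lemma tsum_div_two_pow_succ (a : ℝ) : ∑' i : ℕ, a / 2 ^ (i + 1) = a := by
  simpa only [pow_succ', ← div_div] using tsum_geometric_two' a

lemma tendsto_nhds_zero_of_forall_eventually_lt {β : Type*} {l : Filter β} {u : β → ℝ}
    (h0 : ∀ x, 0 ≤ u x) (h : ∀ ε > 0, ∀ᶠ x in l, u x < ε) : Tendsto u l (𝓝 0) :=
  tendsto_order.2 ⟨fun _ ha => Eventually.of_forall fun x => ha.trans_le (h0 x), h⟩

section Frechet

variable {X : Type*} [AddCommGroup X] [Module ℝ X] (p : ℕ → Seminorm ℝ X)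

lemma semiDist_nonneg (q : Seminorm ℝ X) (x y : X) : 0 ≤ semiDist q x y :=
  apply_nonneg q (x - y)

lemma WithSeminorms.exists_semiDist_le [TopologicalSpace X] {ι : Type*} {q : ι → Seminorm ℝ X}
    (hq : WithSeminorms q) {A B : Set X} (hA : Bornology.IsVonNBounded ℝ A)
    (hB : Bornology.IsVonNBounded ℝ B) (i : ι) :
    ∃ C, ∀ a ∈ A, ∀ b ∈ B, semiDist (q i) a b ≤ C := by
  obtain ⟨r, -, hr⟩ := hq.isVonNBounded_iff_seminorm_bounded.1 hA i
  obtain ⟨s, -, hs⟩ := hq.isVonNBounded_iff_seminorm_bounded.1 hB i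
  exact ⟨r + s, fun a ha b hb =>
    (map_sub_le_add _ _ _).trans (add_le_add (hr a ha).le (hs b hb).le)⟩

lemma frechetDist_term_nonneg (x y : X) (i : ℕ) :
    0 ≤ p (i + 1) (x - y) / (1 + p (i + 1) (x - y)) / 2 ^ (i + 1) := by
  have := apply_nonneg (p (i + 1)) (x - y)
  positivity

lemma frechetDist_term_le (x y : X) (i : ℕ) :
    p (i + 1) (x - y) / (1 + p (i + 1) (x - y)) / 2 ^ (i + 1) ≤ 1 / 2 ^ (i + 1) := by
  gcongr
  exact div_one_add_le_one (apply_nonneg _ _)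

lemma summable_frechetDist_term (x y : X) :
    Summable fun i : ℕ => p (i + 1) (x - y) / (1 + p (i + 1) (x - y)) / 2 ^ (i + 1) :=
  .of_nonneg_of_le (frechetDist_term_nonneg p x y) (frechetDist_term_le p x y)
    (summable_div_two_pow_succ 1)

lemma frechetDist_nonneg (x y : X) : 0 ≤ frechetDist p x y :=
  tsum_nonneg (frechetDist_term_nonneg p x y)

lemma frechetDist_le_one (x y : X) : frechetDist p x y ≤ 1 :=
  ((summable_frechetDist_term p x y).tsum_le_tsum (frechetDist_term_le p x y)
    (summable_div_two_pow_succ 1)).trans_eq (tsum_div_two_pow_succ 1)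

variable {p}

lemma div_two_pow_le_frechetDist (hp : Monotone p) (x y : X) (i : ℕ) :
    p i (x - y) / (1 + p i (x - y)) / 2 ^ (i + 1) ≤ frechetDist p x y := by
  refine le_trans ?_ ((summable_frechetDist_term p x y).le_tsum i
    fun j _ => frechetDist_term_nonneg p x y j)
  gcongr ?_ / _
  exact div_one_add_le_div_one_add (apply_nonneg _ _) (hp i.le_succ _)

lemma exists_pos_semiDist_lt_of_frechetDist_lt (hp : Monotone p) (i : ℕ) {ε : ℝ}
    (hε : 0 < ε) : ∃ δ > 0, ∀ x y, frechetDist p x y < δ → semiDist (p i) x y < ε := by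
  refine ⟨ε / (1 + ε) / 2 ^ (i + 1), by positivity, fun x y hxy => ?_⟩
  by_contra! hle
  have : ε / (1 + ε) / 2 ^ (i + 1) ≤ p i (x - y) / (1 + p i (x - y)) / 2 ^ (i + 1) := by
    gcongr ?_ / _
    exact div_one_add_le_div_one_add hε.le hle
  linarith [div_two_pow_le_frechetDist hp x y i]

lemma frechetDist_le_semiDist_add (hp : Monotone p) (x y : X) (N : ℕ) :
    frechetDist p x y ≤ semiDist (p N) x y + (1 / 2) ^ N := by
  have hT := summable_frechetDist_term p x y
  have head : ∑ i ∈ Finset.range N, p (i + 1) (x - y) / (1 + p (i + 1) (x - y)) / 2 ^ (i + 1)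
      ≤ p N (x - y) :=
    calc _ ≤ ∑ i ∈ Finset.range N, p N (x - y) / 2 ^ (i + 1) := by
          refine Finset.sum_le_sum fun i hi => ?_
          gcongr
          exact (div_one_add_le_self (apply_nonneg _ _)).trans
            (hp (Finset.mem_range.1 hi) _)
      _ ≤ ∑' i, p N (x - y) / 2 ^ (i + 1) :=
          (summable_div_two_pow_succ _).sum_le_tsum _ fun i _ => by positivity
      _ = p N (x - y) := tsum_div_two_pow_succ _
  have tail : ∑' i, p (i + N + 1) (x - y) / (1 + p (i + N + 1) (x - y)) / 2 ^ (i + N + 1)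
      ≤ (1 / 2) ^ N :=
    calc _ ≤ ∑' i : ℕ, (1 / 2) ^ N / 2 ^ (i + 1) := by
          refine (hT.comp_injective (add_left_injective N)).tsum_le_tsum (fun i => ?_)
            (summable_div_two_pow_succ _)
          refine (frechetDist_term_le p x y (i + N)).trans_eq ?_
          rw [div_pow, one_pow, div_div, ← pow_add]
          ring_nf
      _ = (1 / 2) ^ N := tsum_div_two_pow_succ _
  rw [frechetDist, ← hT.sum_add_tsum_nat_add N]
  exact add_le_add head tail

end Frechet

section Convergence

variable {X : Type*} [AddCommGroup X] [Module ℝ X] {p : ℕ → Seminorm ℝ X}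
  {A : ℕ → Set X} {B : Set X}

theorem tendsto_hDist_semiDist_of_tendsto_hDist_frechetDist (hp : Monotone p)
    (hA : ∀ n, (A n).Nonempty) (hB : B.Nonempty)
    (h : Tendsto (fun n => hDist (frechetDist p) (A n) B) atTop (𝓝 0)) (i : ℕ) :
    Tendsto (fun n => hDist (semiDist (p i)) (A n) B) atTop (𝓝 0) := by
  refine tendsto_nhds_zero_of_forall_eventually_lt
    (fun n => hDist_nonneg (semiDist_nonneg _) _ _) fun ε hε => ?_
  obtain ⟨δ, hδ, hmod⟩ := exists_pos_semiDist_lt_of_frechetDist_lt hp i (half_pos hε)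
  filter_upwards [(tendsto_order.1 h).2 δ hδ] with n hn
  exact (hDist_le_of_lt_imp_lt (semiDist_nonneg _) (frechetDist_nonneg p)
    (frechetDist_le_one p) (half_pos hε).le (hA n) hB hmod hn).trans_lt (half_lt_self hε)

theorem tendsto_hDist_frechetDist_of_forall_tendsto_hDist_semiDist [TopologicalSpace X]
    (hp : WithSeminorms p) (hmono : Monotone p) (hA : ∀ n, (A n).Nonempty) (hB : B.Nonempty)
    (hAb : ∀ n, Bornology.IsVonNBounded ℝ (A n)) (hBb : Bornology.IsVonNBounded ℝ B)
    (h : ∀ i, Tendsto (fun n => hDist (semiDist (p i)) (A n) B) atTop (𝓝 0)) :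
    Tendsto (fun n => hDist (frechetDist p) (A n) B) atTop (𝓝 0) := by
  refine tendsto_nhds_zero_of_forall_eventually_lt
    (fun n => hDist_nonneg (frechetDist_nonneg p) _ _) fun ε hε => ?_
  obtain ⟨N, hN⟩ := exists_pow_lt_of_lt_one (half_pos hε) (by norm_num : (1 / 2 : ℝ) < 1)
  filter_upwards [(tendsto_order.1 (h N)).2 _ (half_pos hε)] with n hn
  calc hDist (frechetDist p) (A n) B ≤ hDist (semiDist (p N)) (A n) B + (1 / 2) ^ N :=
        hDist_le_add_of_le_add (semiDist_nonneg _) (frechetDist_nonneg p) (by positivity)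
          (hA n) hB (hp.exists_semiDist_le (hAb n) hBb N) (hp.exists_semiDist_le hBb (hAb n) N)
          (frechetDist_le_semiDist_add hmono · · N)
    _ < ε := by linarith

end Convergence

/-- a `cb(X)`-valued multifunction on `[0,1]` is Bochner measurable iff it is
totally measurable. -/
theorem stmt4 {X : Type*} [AddCommGroup X] [Module ℝ X] [UniformSpace X]
    [IsUniformAddGroup X] [ContinuousSMul ℝ X] [CompleteSpace X]
    (p : ℕ → Seminorm ℝ X) (hp : WithSeminorms p) (hpmono : Monotone p)
    (Γ : ℝ → Set X) (hΓ : ∀ t ∈ Set.Icc (0:ℝ) 1, IsCB (Γ t)) :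
    BochnerMeasMF p IsCB Γ ↔ TotallyMeasMF p IsCB Γ := by
  have hmem : ∀ᵐ t ∂μ01, t ∈ Set.Icc (0:ℝ) 1 := ae_restrict_mem measurableSet_Icc
  constructor
  · rintro ⟨Γₙ, hsimp, hae⟩
    refine ⟨Γₙ, hsimp, fun i => ?_⟩
    filter_upwards [hae, hmem] with t ht htI
    exact tendsto_hDist_semiDist_of_tendsto_hDist_frechetDist hpmono
      (fun n => ((hsimp n).2 t).1) (hΓ t htI).1 ht i
  · rintro ⟨Γₙ, hsimp, hae⟩
    refine ⟨Γₙ, hsimp, ?_⟩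
    filter_upwards [ae_all_iff.2 hae, hmem] with t ht htI
    exact tendsto_hDist_frechetDist_of_forall_tendsto_hDist_semiDist hp hpmono
      (fun n => ((hsimp n).2 t).1) (hΓ t htI).1 (fun n => ((hsimp n).2 t).2.2.1)
      (hΓ t htI).2.2.1 ht
end

section
/- Let X be a Fréchet space. If a multifunction Γ: [0,1] → ck(X) is integrable (totally measurable with an approximating sequence of simple multifunctions that is Cauchy in mean for every Hausdorff semimetric H_i), then Γ is Pettis integrable in ck(X), and for every Lebesgue measurable E ⊆ [0,1] the two integrals coincide: σ(x*, ∫_E Γ dt) = ∫_E σ(x*, Γ(t)) dt for all x* ∈ X*. -/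
open MeasureTheory Set Filter Topology Pointwise

/-! Every `x* ∈ X*` is dominated by a single seminorm `p_i` (the `p_i` increase), so on compact
sets `σ(x*, ·)` is Lipschitz for `H_i`; it also turns Minkowski sums and integrals of simple
multifunctions into sums and integrals. Hence the simple functions `σ(x*, Γₙ(·))` converge a.e. to
`σ(x*, Γ(·))` and are Cauchy in `L¹`, so by Fatou the limit is integrable and attained in `L¹`.
Therefore `σ(x*, ∫_E Γₙ) = ∫_E σ(x*, Γₙ) → ∫_E σ(x*, Γ)`, while `σ(x*, ∫_E Γₙ) → σ(x*, ∫_E Γ)`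
because `∫_E Γₙ → ∫_E Γ` in every `H_i`. -/

open scoped ENNReal

section SupportFunction

variable {X : Type*} [AddCommGroup X] [Module ℝ X]

lemma hDist_semiDist_nonneg (q : Seminorm ℝ X) (A B : Set X) : 0 ≤ hDist (semiDist q) A B :=
  le_max_of_le_left <| Real.sSup_nonneg <| by
    rintro _ ⟨a, -, rfl⟩
    exact Real.sInf_nonneg <| by rintro _ ⟨b, -, rfl⟩; exact apply_nonneg q _

variable [TopologicalSpace X]

lemma exists_abs_le_mul_seminorm {p : ℕ → Seminorm ℝ X} (hp : WithSeminorms p)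
    (hpmono : Monotone p) (ℓ : X →L[ℝ] ℝ) : ∃ i, ∃ c : ℝ, 0 ≤ c ∧ ∀ x, |ℓ x| ≤ c * p i x := by
  let q : Seminorm ℝ X := (normSeminorm ℝ ℝ).comp ℓ.toLinearMap
  obtain ⟨s, C, -, hqC⟩ := Seminorm.bound_of_continuous hp q (continuous_norm.comp ℓ.continuous)
  have hsup : s.sup p ≤ p (s.sup id) :=
    Finset.sup_le fun j hj => hpmono (Finset.le_sup (f := id) hj)
  exact ⟨s.sup id, C, C.coe_nonneg, fun x =>
    (hqC x).trans (mul_le_mul_of_nonneg_left (hsup x) C.coe_nonneg)⟩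

lemma sInf_semiDist_le_excess {q : Seminorm ℝ X} (hq : Continuous q) {A B : Set X}
    (hA : IsCompact A) (hB : B.Nonempty) {a : X} (ha : a ∈ A) :
    sInf (semiDist q a '' B) ≤ excess (semiDist q) A B := by
  obtain ⟨b₀, hb₀⟩ := hB
  refine le_csSup ⟨sSup (q '' A) + q b₀, ?_⟩ ⟨a, ha, rfl⟩
  rintro _ ⟨a', ha', rfl⟩
  calc sInf (semiDist q a' '' B) ≤ q (a' - b₀) :=
        csInf_le ⟨0, by rintro _ ⟨b, -, rfl⟩; exact apply_nonneg q _⟩ ⟨b₀, hb₀, rfl⟩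
    _ ≤ q a' + q b₀ := map_sub_le_add q a' b₀
    _ ≤ sSup (q '' A) + q b₀ := by
        gcongr; exact le_csSup (hA.image hq).bddAbove ⟨a', ha', rfl⟩

variable {q : Seminorm ℝ X} {ℓ : X →L[ℝ] ℝ} {c : ℝ}

lemma suppFn_le_add_mul_excess (hq : Continuous q) (hc : 0 ≤ c) (hℓ : ∀ x, |ℓ x| ≤ c * q x)
    {A B : Set X} (hA : IsCompact A) (hA' : A.Nonempty) (hB : IsCompact B) (hB' : B.Nonempty) :
    suppFn ℓ A ≤ suppFn ℓ B + c * excess (semiDist q) A B := by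
  refine csSup_le (hA'.image ℓ) ?_
  rintro _ ⟨a, ha, rfl⟩
  have hbound : ∀ b ∈ B, ℓ a - suppFn ℓ B ≤ c * q (a - b) := fun b hb => calc
    ℓ a - suppFn ℓ B ≤ ℓ a - ℓ b := by
        gcongr; exact le_csSup (hB.image ℓ.continuous).bddAbove ⟨b, hb, rfl⟩
    _ = ℓ (a - b) := (map_sub ℓ a b).symm
    _ ≤ c * q (a - b) := (le_abs_self _).trans (hℓ _)
  have hinf : ℓ a - suppFn ℓ B ≤ c * sInf (semiDist q a '' B) := by
    rw [← smul_eq_mul, ← Real.sInf_smul_of_nonneg hc]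
    refine le_csInf ((hB'.image _).smul_set) ?_
    rintro _ ⟨_, ⟨b, hb, rfl⟩, rfl⟩
    exact hbound b hb
  have := mul_le_mul_of_nonneg_left (sInf_semiDist_le_excess hq hA hB' ha) hc
  linarith

lemma abs_suppFn_sub_le_mul_hDist (hq : Continuous q) (hc : 0 ≤ c) (hℓ : ∀ x, |ℓ x| ≤ c * q x)
    {A B : Set X} (hA : IsCompact A ∧ A.Nonempty) (hB : IsCompact B ∧ B.Nonempty) :
    |suppFn ℓ A - suppFn ℓ B| ≤ c * hDist (semiDist q) A B := by
  have hAB := suppFn_le_add_mul_excess hq hc hℓ hA.1 hA.2 hB.1 hB.2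
  have hBA := suppFn_le_add_mul_excess hq hc hℓ hB.1 hB.2 hA.1 hA.2
  have h₁ := mul_le_mul_of_nonneg_left
    (le_max_left (excess (semiDist q) A B) (excess (semiDist q) B A)) hc
  have h₂ := mul_le_mul_of_nonneg_left
    (le_max_right (excess (semiDist q) A B) (excess (semiDist q) B A)) hc
  rw [abs_sub_le_iff]
  exact ⟨by unfold hDist; linarith, by unfold hDist; linarith⟩

lemma tendsto_suppFn_of_tendsto_hDist (hq : Continuous q) (hc : 0 ≤ c)
    (hℓ : ∀ x, |ℓ x| ≤ c * q x) {A : ℕ → Set X} {B : Set X}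
    (hA : ∀ n, IsCompact (A n) ∧ (A n).Nonempty) (hB : IsCompact B ∧ B.Nonempty)
    (hAB : Tendsto (fun n => hDist (semiDist q) (A n) B) atTop (𝓝 0)) :
    Tendsto (fun n => suppFn ℓ (A n)) atTop (𝓝 (suppFn ℓ B)) := by
  rw [← tendsto_sub_nhds_zero_iff]
  refine squeeze_zero_norm (fun n => ?_) (by simpa using hAB.const_mul c)
  exact (Real.norm_eq_abs _).trans_le (abs_suppFn_sub_le_mul_hDist hq hc hℓ (hA n) hB)

end SupportFunction

lemma isCompact_and_nonempty_finsetSum {X ι : Type*} [AddCommMonoid X] [TopologicalSpace X]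
    [ContinuousAdd X] {s : Finset ι} {K : ι → Set X}
    (hK : ∀ i ∈ s, IsCompact (K i) ∧ (K i).Nonempty) :
    IsCompact (∑ i ∈ s, K i) ∧ (∑ i ∈ s, K i).Nonempty :=
  Finset.sum_induction K (fun A => IsCompact A ∧ A.Nonempty)
    (fun _ _ hA hB => ⟨hA.1.add hB.1, hA.2.add hB.2⟩) ⟨isCompact_singleton, Set.zero_nonempty⟩ hK

section MinkowskiSum

variable {X : Type*} [AddCommGroup X] [Module ℝ X] [TopologicalSpace X]

lemma suppFn_add (ℓ : X →L[ℝ] ℝ) {A B : Set X} (hA : IsCompact A ∧ A.Nonempty)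
    (hB : IsCompact B ∧ B.Nonempty) : suppFn ℓ (A + B) = suppFn ℓ A + suppFn ℓ B := by
  rw [suppFn, Set.image_add]
  exact csSup_add (hA.2.image ℓ) (hA.1.image ℓ.continuous).bddAbove
    (hB.2.image ℓ) (hB.1.image ℓ.continuous).bddAbove

lemma suppFn_smul (ℓ : X →L[ℝ] ℝ) {r : ℝ} (hr : 0 ≤ r) (A : Set X) :
    suppFn ℓ (r • A) = r * suppFn ℓ A := by
  rw [suppFn, suppFn, Set.image_smul_comm ℓ r A (fun x => ℓ.map_smul r x),
    Real.sSup_smul_of_nonneg hr, smul_eq_mul]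

lemma suppFn_finsetSum [ContinuousAdd X] (ℓ : X →L[ℝ] ℝ) {ι : Type*} {s : Finset ι}
    {K : ι → Set X} (hK : ∀ i ∈ s, IsCompact (K i) ∧ (K i).Nonempty) :
    suppFn ℓ (∑ i ∈ s, K i) = ∑ i ∈ s, suppFn ℓ (K i) := by
  classical
  induction s using Finset.induction_on with
  | empty => simp [suppFn]
  | insert i s hi ih =>
    have hs : ∀ j ∈ s, IsCompact (K j) ∧ (K j).Nonempty :=
      fun j hj => hK j (Finset.mem_insert_of_mem hj)
    rw [Finset.sum_insert hi, Finset.sum_insert hi,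
      suppFn_add ℓ (hK i (Finset.mem_insert_self i s)) (isCompact_and_nonempty_finsetSum hs), ih hs]

end MinkowskiSum

namespace IsSimpleMF

section Measurability

variable {X : Type*} {Φ Ψ : ℝ → Set X}

def toSimpleFunc (h : IsSimpleMF Φ) : SimpleFunc ℝ (Set X) := ⟨Φ, h.2, h.1⟩

lemma integrable_comp (h : IsSimpleMF Φ) (G : Set X → ℝ) (μ : Measure ℝ) [IsFiniteMeasure μ] :
    Integrable (fun t => G (Φ t)) μ :=
  (h.toSimpleFunc.map G).integrable_of_isFiniteMeasure

lemma integrable_comp₂ (hΦ : IsSimpleMF Φ) (hΨ : IsSimpleMF Ψ) (G : Set X → Set X → ℝ)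
    (μ : Measure ℝ) [IsFiniteMeasure μ] : Integrable (fun t => G (Φ t) (Ψ t)) μ :=
  ((hΦ.toSimpleFunc.pair hΨ.toSimpleFunc).map (Function.uncurry G)).integrable_of_isFiniteMeasure

lemma comp_eq_sum_indicator (h : IsSimpleMF Φ) {M : Type*} [AddCommMonoid M] (G : Set X → M) :
    (fun t => G (Φ t)) =
      fun t => ∑ C ∈ h.1.toFinset, {s | Φ s = C}.indicator (fun _ => G C) t := by
  funext t
  simp [Set.indicator_apply]

lemma setIntegral_comp (h : IsSimpleMF Φ) (G : Set X → ℝ) {E : Set ℝ} (hE : volume E ≠ ∞) :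
    ∫ t in E, G (Φ t) = ∑ C ∈ h.1.toFinset, (volume (E ∩ {t | Φ t = C})).toReal * G C := by
  have : IsFiniteMeasure (volume.restrict E) := isFiniteMeasure_restrict.2 hE
  rw [h.comp_eq_sum_indicator G,
    integral_finsetSum _ fun C _ => (integrable_const _).indicator (h.2 C)]
  refine Finset.sum_congr rfl fun C _ => ?_
  rw [integral_indicator_const _ (h.2 C), measureReal_def, Measure.restrict_apply (h.2 C),
    smul_eq_mul, Set.inter_comm]

end Measurability

variable {X : Type*} [AddCommGroup X] [Module ℝ X] {Φ : ℝ → Set X}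

lemma simpleIntegral_eq (h : IsSimpleMF Φ) (E : Set ℝ) :
    simpleIntegral Φ E = ∑ C ∈ h.1.toFinset, (volume (E ∩ {t | Φ t = C})).toReal • C := by
  rw [simpleIntegral, dif_pos h.1]

variable [TopologicalSpace X] [ContinuousConstSMul ℝ X]

lemma isCompact_and_nonempty_smul (h : IsSimpleMF Φ)
    (hK : ∀ t, IsCompact (Φ t) ∧ (Φ t).Nonempty) (r : ℝ) {C : Set X} (hC : C ∈ h.1.toFinset) :
    IsCompact (r • C) ∧ (r • C).Nonempty := by
  obtain ⟨t, rfl⟩ := h.1.mem_toFinset.1 hC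
  exact ⟨(hK t).1.smul r, (hK t).2.smul_set⟩

variable [ContinuousAdd X]

lemma isCompact_and_nonempty_simpleIntegral (h : IsSimpleMF Φ)
    (hK : ∀ t, IsCompact (Φ t) ∧ (Φ t).Nonempty) (E : Set ℝ) :
    IsCompact (simpleIntegral Φ E) ∧ (simpleIntegral Φ E).Nonempty := by
  rw [h.simpleIntegral_eq]
  exact isCompact_and_nonempty_finsetSum fun _ => h.isCompact_and_nonempty_smul hK _

lemma suppFn_simpleIntegral (h : IsSimpleMF Φ) (hK : ∀ t, IsCompact (Φ t) ∧ (Φ t).Nonempty)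
    (ℓ : X →L[ℝ] ℝ) {E : Set ℝ} (hE : volume E ≠ ∞) :
    suppFn ℓ (simpleIntegral Φ E) = ∫ t in E, suppFn ℓ (Φ t) := by
  rw [h.simpleIntegral_eq, suppFn_finsetSum ℓ fun _ => h.isCompact_and_nonempty_smul hK _,
    h.setIntegral_comp _ hE]
  exact Finset.sum_congr rfl fun C _ => suppFn_smul ℓ ENNReal.toReal_nonneg C

end IsSimpleMF

section CauchyInMean

variable {α E : Type*} [MeasurableSpace α] {μ : Measure α} [NormedAddCommGroup E]

lemma eLpNorm_one_le_ofReal_integral {f : α → E} {g : α → ℝ} (hg : Integrable g μ)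
    (hfg : ∀ᵐ x ∂μ, ‖f x‖ ≤ g x) : eLpNorm f 1 μ ≤ ENNReal.ofReal (∫ x, g x ∂μ) := by
  rw [eLpNorm_one_eq_lintegral_enorm,
    ofReal_integral_eq_lintegral_ofReal hg (hfg.mono fun x hx => (norm_nonneg _).trans hx)]
  refine lintegral_mono_ae (hfg.mono fun x hx => ?_)
  rw [← ofReal_norm]
  exact ENNReal.ofReal_le_ofReal hx

lemma tendsto_eLpNorm_sub_of_cauchy_of_ae_tendsto {p : ℝ≥0∞} {f : ℕ → α → E} {g : α → E}
    (hf : ∀ n, AEStronglyMeasurable (f n) μ)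
    (hcau : Tendsto (fun nm : ℕ × ℕ => eLpNorm (f nm.1 - f nm.2) p μ) atTop (𝓝 0))
    (hlim : ∀ᵐ x ∂μ, Tendsto (fun n => f n x) atTop (𝓝 (g x))) :
    Tendsto (fun n => eLpNorm (f n - g) p μ) atTop (𝓝 0) := by
  refine ENNReal.tendsto_atTop_zero.2 fun ε hε => ?_
  obtain ⟨⟨N₁, N₂⟩, hN⟩ := ENNReal.tendsto_atTop_zero.1 hcau ε hε
  refine ⟨max N₁ N₂, fun n hn => Lp.eLpNorm_le_of_ae_tendsto (u := atTop) ?_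
    (fun m => (hf n).sub (hf m)) ?_⟩
  · filter_upwards [eventually_ge_atTop N₂] with m hm
    exact hN (n, m) ⟨le_of_max_le_left hn, hm⟩
  · filter_upwards [hlim] with x hx
    exact tendsto_const_nhds.sub hx

end CauchyInMean

section Pettis

variable {X : Type*} [AddCommGroup X] [Module ℝ X] [TopologicalSpace X]
  {q : Seminorm ℝ X} {ℓ : X →L[ℝ] ℝ} {c : ℝ} {Φ : ℕ → ℝ → Set X}

lemma tendsto_eLpNorm_suppFn_sub {μ : Measure ℝ} [IsFiniteMeasure μ] (hq : Continuous q)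
    (hc : 0 ≤ c) (hℓ : ∀ x, |ℓ x| ≤ c * q x) (hΦ : ∀ n, IsSimpleMF (Φ n))
    (hΦK : ∀ n t, IsCompact (Φ n t) ∧ (Φ n t).Nonempty)
    (hcauchy : ∀ ε > (0:ℝ), ∃ N, ∀ n ≥ N, ∀ m ≥ N,
      ∫ t, hDist (semiDist q) (Φ n t) (Φ m t) ∂μ < ε) :
    Tendsto (fun nm : ℕ × ℕ =>
      eLpNorm (fun t => suppFn ℓ (Φ nm.1 t) - suppFn ℓ (Φ nm.2 t)) 1 μ) atTop (𝓝 0) := by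
  let H : ℕ × ℕ → ℝ → ℝ := fun nm t => hDist (semiDist q) (Φ nm.1 t) (Φ nm.2 t)
  have hH : Tendsto (fun nm => ∫ t, H nm t ∂μ) atTop (𝓝 0) := by
    refine Metric.tendsto_atTop.2 fun ε hε => ?_
    obtain ⟨N, hN⟩ := hcauchy ε hε
    refine ⟨(N, N), fun nm hnm => ?_⟩
    rw [Real.dist_0_eq_abs, abs_of_nonneg (integral_nonneg fun t => hDist_semiDist_nonneg q _ _)]
    exact hN _ hnm.1 _ hnm.2
  refine tendsto_of_tendsto_of_tendsto_of_le_of_le tendsto_const_nhds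
    (by simpa using ENNReal.tendsto_ofReal (hH.const_mul c)) (fun _ => zero_le) fun nm => ?_
  rw [← integral_const_mul]
  exact eLpNorm_one_le_ofReal_integral
    (((hΦ nm.1).integrable_comp₂ (hΦ nm.2) (hDist (semiDist q)) μ).const_mul c)
    (Eventually.of_forall fun t => (Real.norm_eq_abs _).trans_le <|
      abs_suppFn_sub_le_mul_hDist hq hc hℓ (hΦK nm.1 t) (hΦK nm.2 t))

variable [ContinuousAdd X] [ContinuousConstSMul ℝ X]

theorem integrable_suppFn_and_tendsto_suppFn_simpleIntegral (hq : Continuous q) (hc : 0 ≤ c)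
    (hℓ : ∀ x, |ℓ x| ≤ c * q x) {Γ : ℝ → Set X}
    (hΓ : ∀ t ∈ Set.Icc (0:ℝ) 1, IsCompact (Γ t) ∧ (Γ t).Nonempty)
    (hΦ : ∀ n, IsSimpleMF (Φ n)) (hΦK : ∀ n t, IsCompact (Φ n t) ∧ (Φ n t).Nonempty)
    (hconv : ∀ᵐ t ∂μ01, Tendsto (fun n => hDist (semiDist q) (Φ n t) (Γ t)) atTop (𝓝 0))
    (hcauchy : ∀ ε > (0:ℝ), ∃ N, ∀ n ≥ N, ∀ m ≥ N,
      ∫ t, hDist (semiDist q) (Φ n t) (Φ m t) ∂μ01 < ε) :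
    Integrable (fun t => suppFn ℓ (Γ t)) μ01 ∧ ∀ E ⊆ Set.Icc (0:ℝ) 1,
      Tendsto (fun n => suppFn ℓ (simpleIntegral (Φ n) E)) atTop
        (𝓝 (∫ t in E, suppFn ℓ (Γ t))) := by
  have : IsFiniteMeasure μ01 := isFiniteMeasure_restrict.2 measure_Icc_lt_top.ne
  have hf (n : ℕ) : Integrable (fun t => suppFn ℓ (Φ n t)) μ01 := (hΦ n).integrable_comp _ _
  have hlim : ∀ᵐ t ∂μ01, Tendsto (fun n => suppFn ℓ (Φ n t)) atTop (𝓝 (suppFn ℓ (Γ t))) := by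
    filter_upwards [hconv, ae_restrict_mem measurableSet_Icc] with t ht htI
    exact tendsto_suppFn_of_tendsto_hDist hq hc hℓ (hΦK · t) (hΓ t htI) ht
  have hg := aestronglyMeasurable_of_tendsto_ae atTop (fun n => (hf n).aestronglyMeasurable) hlim
  have hL1 := tendsto_eLpNorm_sub_of_cauchy_of_ae_tendsto (fun n => (hf n).aestronglyMeasurable)
    (tendsto_eLpNorm_suppFn_sub hq hc hℓ hΦ hΦK hcauchy) hlim
  refine ⟨memLp_one_iff_integrable.1 <| Lp.memLp_of_cauchy_tendsto le_rfl
    (fun n => memLp_one_iff_integrable.2 (hf n)) _ hg hL1, fun E hE => ?_⟩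
  have hEfin : volume E ≠ ∞ := ((measure_mono hE).trans_lt measure_Icc_lt_top).ne
  simp only [(hΦ _).suppFn_simpleIntegral (hΦK _) ℓ hEfin]
  rw [← Measure.restrict_restrict_of_subset hE]
  exact tendsto_setIntegral_of_L1' _ hg (Eventually.of_forall hf) hL1 E

end Pettis

theorem stmt9_general {X : Type*} [AddCommGroup X] [Module ℝ X] [UniformSpace X]
    [IsUniformAddGroup X] [ContinuousSMul ℝ X]
    (p : ℕ → Seminorm ℝ X) (hp : WithSeminorms p) (hpmono : Monotone p)
    (Γ : ℝ → Set X) (hΓ : ∀ t ∈ Set.Icc (0:ℝ) 1, IsCK (Γ t))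
    (Γₙ : ℕ → ℝ → Set X)
    (hsimple : ∀ n, IsSimpleMF (Γₙ n) ∧ ∀ t, IsCK (Γₙ n t))
    (hconv : ∀ i : ℕ, ∀ᵐ t ∂μ01,
      Tendsto (fun n => hDist (semiDist (p i)) (Γₙ n t) (Γ t)) atTop (𝓝 0))
    (hcauchy : ∀ i : ℕ, ∀ ε > (0:ℝ), ∃ N, ∀ n ≥ N, ∀ m ≥ N,
      ∫ t in Set.Icc (0:ℝ) 1, hDist (semiDist (p i)) (Γₙ n t) (Γₙ m t) < ε)
    (I : Set ℝ → Set X)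
    (hI : ∀ E ⊆ Set.Icc (0:ℝ) 1, MeasurableSet E → IsCK (I E) ∧
      ∀ i : ℕ, Tendsto (fun n => hDist (semiDist (p i)) (simpleIntegral (Γₙ n) E) (I E))
        atTop (𝓝 0)) :
    (∀ x' : X →L[ℝ] ℝ, MeasureTheory.IntegrableOn
        (fun t => suppFn (⇑x') (Γ t)) (Set.Icc 0 1) volume) ∧
    ∀ E ⊆ Set.Icc (0:ℝ) 1, MeasurableSet E → ∀ x' : X →L[ℝ] ℝ,
      suppFn (⇑x') (I E) = ∫ t in E, suppFn (⇑x') (Γ t) := by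
  have hK (n : ℕ) (t : ℝ) : IsCompact (Γₙ n t) ∧ (Γₙ n t).Nonempty :=
    ⟨((hsimple n).2 t).2.1, ((hsimple n).2 t).1⟩
  have key (x' : X →L[ℝ] ℝ) : IntegrableOn (fun t => suppFn x' (Γ t)) (Set.Icc 0 1) ∧
      ∀ E ⊆ Set.Icc (0:ℝ) 1, MeasurableSet E → suppFn x' (I E) = ∫ t in E, suppFn x' (Γ t) := by
    obtain ⟨i, c, hc, hx'⟩ := exists_abs_le_mul_seminorm hp hpmono x'
    have hq := hp.continuous_seminorm i
    obtain ⟨hint, hlim⟩ := integrable_suppFn_and_tendsto_suppFn_simpleIntegral hq hc hx'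
      (fun t ht => ⟨(hΓ t ht).2.1, (hΓ t ht).1⟩) (fun n => (hsimple n).1) hK (hconv i) (hcauchy i)
    refine ⟨hint, fun E hE hEm => tendsto_nhds_unique ?_ (hlim E hE)⟩
    obtain ⟨hIE, hIlim⟩ := hI E hE hEm
    exact tendsto_suppFn_of_tendsto_hDist hq hc hx'
      (fun n => (hsimple n).1.isCompact_and_nonempty_simpleIntegral (hK n) E) ⟨hIE.2.1, hIE.1⟩
      (hIlim i)
  exact ⟨fun x' => (key x').1, fun E hE hEm x' => (key x').2 E hE hEm⟩

/-- if `Γ : [0,1] → ck(X)` is integrable (totally measurable via simple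
multifunctions Cauchy in mean in each `H_i`, with `H_i`-limit integrals `I E ∈ ck(X)`),
then `Γ` is Pettis integrable in `ck(X)` and the integrals coincide:
`σ(x*, I E) = ∫_E σ(x*, Γ(t)) dt` for all `x*`. -/
theorem stmt9 {X : Type*} [AddCommGroup X] [Module ℝ X] [UniformSpace X]
    [IsUniformAddGroup X] [ContinuousSMul ℝ X] [CompleteSpace X]
    (p : ℕ → Seminorm ℝ X) (hp : WithSeminorms p) (hpmono : Monotone p)
    (Γ : ℝ → Set X) (hΓ : ∀ t ∈ Set.Icc (0:ℝ) 1, IsCK (Γ t))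
    (Γₙ : ℕ → ℝ → Set X)
    (hsimple : ∀ n, IsSimpleMF (Γₙ n) ∧ ∀ t, IsCK (Γₙ n t))
    (hconv : ∀ i : ℕ, ∀ᵐ t ∂μ01,
      Tendsto (fun n => hDist (semiDist (p i)) (Γₙ n t) (Γ t)) atTop (𝓝 0))
    (hcauchy : ∀ i : ℕ, ∀ ε > (0:ℝ), ∃ N, ∀ n ≥ N, ∀ m ≥ N,
      ∫ t in Set.Icc (0:ℝ) 1, hDist (semiDist (p i)) (Γₙ n t) (Γₙ m t) < ε)
    (I : Set ℝ → Set X)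
    (hI : ∀ E ⊆ Set.Icc (0:ℝ) 1, MeasurableSet E → IsCK (I E) ∧
      ∀ i : ℕ, Tendsto (fun n => hDist (semiDist (p i)) (simpleIntegral (Γₙ n) E) (I E))
        atTop (𝓝 0)) :
    (∀ x' : X →L[ℝ] ℝ, MeasureTheory.IntegrableOn
        (fun t => suppFn (⇑x') (Γ t)) (Set.Icc 0 1) volume) ∧
    ∀ E ⊆ Set.Icc (0:ℝ) 1, MeasurableSet E → ∀ x' : X →L[ℝ] ℝ,
      suppFn (⇑x') (I E) = ∫ t in E, suppFn (⇑x') (Γ t) :=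
  stmt9_general p hp hpmono Γ hΓ Γₙ hsimple hconv hcauchy I hI
end

section
/- Let X be a Fréchet space, Γ: [0,1] → ck(X) Pettis integrable in ck(X), and G: [0,1] → ck(X) scalarly measurable with G(t) ⊆ Γ(t) for all t ∈ [0,1]. Then G is Pettis integrable in ck(X). -/
open MeasureTheory Set Filter Topology Pointwise

/-! The integrals `φ(x*) = ∫_E σ(x*, G)` form a sublinear functional on `X*` dominated by the
support function of `C_E = ∫_E Γ`, since `G ⊆ Γ`. By Hahn–Banach, for every `x*` some linear
functional `g ≤ φ` has `g x* = φ x*`; being dominated by the support function of the compact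
convex set `C_E`, such a `g` is evaluation at a point of `C_E` (finite intersection property plus
separation in finite dimension). Hence `φ` is the support function of the compact convex set
`{x ∈ C_E | ∀ y*, y* x ≤ φ y*}`. Integrability of `σ(x*, G)` comes from
`-σ(-x*, Γ) ≤ σ(x*, G) ≤ σ(x*, Γ)`. -/

section SupportFunction

variable {X : Type*} [TopologicalSpace X] {f g : X → ℝ} {C D : Set X}

theorem le_suppFn (hf : Continuous f) (hC : IsCompact C) {x : X} (hx : x ∈ C) :
    f x ≤ suppFn f C :=
  le_csSup (hC.image hf).bddAbove ⟨x, hx, rfl⟩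

omit [TopologicalSpace X] in
theorem suppFn_le (hC : C.Nonempty) {M : ℝ} (h : ∀ x ∈ C, f x ≤ M) : suppFn f C ≤ M :=
  csSup_le (hC.image f) (forall_mem_image.2 h)

theorem suppFn_mono (hf : Continuous f) (hC : C.Nonempty) (hD : IsCompact D) (h : C ⊆ D) :
    suppFn f C ≤ suppFn f D :=
  suppFn_le hC fun _ hx => le_suppFn hf hD (h hx)

theorem neg_suppFn_neg_le_suppFn (hf : Continuous f) (hC : C.Nonempty) (hCc : IsCompact C)
    (hD : IsCompact D) (h : C ⊆ D) : -suppFn (-f) D ≤ suppFn f C := by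
  obtain ⟨x, hx⟩ := hC
  have hneg : -f x ≤ suppFn (-f) D := le_suppFn hf.neg hD (h hx)
  linarith [le_suppFn hf hCc hx]

theorem suppFn_add_le (hf : Continuous f) (hg : Continuous g) (hC : IsCompact C)
    (hne : C.Nonempty) : suppFn (f + g) C ≤ suppFn f C + suppFn g C :=
  suppFn_le hne fun _ hx => add_le_add (le_suppFn hf hC hx) (le_suppFn hg hC hx)

omit [TopologicalSpace X] in
theorem suppFn_smul_s13 {c : ℝ} (hc : 0 ≤ c) : suppFn (c • f) C = c * suppFn f C := by
  rw [suppFn, suppFn, ← smul_eq_mul, ← Real.sSup_smul_of_nonneg hc, ← Set.image_smul,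
    Set.image_image]
  rfl

end SupportFunction

theorem mem_of_forall_le_suppFn {E : Type*} [TopologicalSpace E] [AddCommGroup E] [Module ℝ E]
    [IsTopologicalAddGroup E] [ContinuousSMul ℝ E] [LocallyConvexSpace ℝ E] {K : Set E}
    (hne : K.Nonempty) (hconv : Convex ℝ K) (hclosed : IsClosed K) {v : E}
    (hv : ∀ ℓ : E →L[ℝ] ℝ, ℓ v ≤ suppFn ℓ K) : v ∈ K := by
  by_contra hvK
  obtain ⟨ℓ, u, hℓv, hℓK⟩ := geometric_hahn_banach_point_closed hconv hclosed hvK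
  have hsupp : suppFn ⇑(-ℓ) K ≤ -u :=
    suppFn_le hne fun b hb => by simpa using (hℓK b hb).le
  have := hv (-ℓ)
  rw [neg_apply] at this
  linarith

theorem exists_forall_eq_of_le_suppFn {X : Type*} [TopologicalSpace X] [AddCommGroup X]
    [Module ℝ X] {D : Set X} (hne : D.Nonempty) (hcomp : IsCompact D) (hconv : Convex ℝ D)
    (g : (X →L[ℝ] ℝ) →ₗ[ℝ] ℝ) (hg : ∀ y' : X →L[ℝ] ℝ, g y' ≤ suppFn y' D) :
    ∃ x ∈ D, ∀ y' : X →L[ℝ] ℝ, y' x = g y' := by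
  suffices key : ∀ u : Finset (X →L[ℝ] ℝ), (D ∩ ⋂ y' ∈ u, {x | y' x = g y'}).Nonempty by
    obtain ⟨x, hxD, hx⟩ := hcomp.inter_iInter_nonempty (fun y' => {x | y' x = g y'})
      (fun y' => isClosed_eq y'.continuous continuous_const) key
    exact ⟨x, hxD, mem_iInter.1 hx⟩
  classical
  intro u
  let T : X →L[ℝ] (u → ℝ) := ContinuousLinearMap.pi fun i => i.1
  have hT : ∀ ℓ : (u → ℝ) →L[ℝ] ℝ, g (ℓ.comp T) = ℓ fun i => g i.1 := by
    intro ℓ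
    have hℓ (w : u → ℝ) : ℓ w = ∑ i, w i * ℓ (fun j => if i = j then 1 else 0) := by
      simpa using LinearMap.pi_apply_eq_sum_univ (ℓ : (u → ℝ) →ₗ[ℝ] ℝ) w
    have hℓT : ℓ.comp T = ∑ i, ℓ (fun j => if i = j then 1 else 0) • (i.1 : X →L[ℝ] ℝ) := by
      ext x
      rw [ContinuousLinearMap.comp_apply, hℓ]
      simp [T, mul_comm]
    rw [hℓT, hℓ]
    simp [mul_comm]
  have hmem : (fun i : u => g i.1) ∈ T '' D := by
    refine mem_of_forall_le_suppFn (hne.image T) (hconv.linear_image T.toLinearMap)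
      (hcomp.image T.continuous).isClosed fun ℓ => ?_
    rw [← hT, suppFn, image_image]
    exact hg _
  obtain ⟨x, hxD, hTx⟩ := hmem
  exact ⟨x, hxD, mem_iInter₂.2 fun y' hy' => congrFun hTx ⟨y', hy'⟩⟩

theorem exists_linearMap_le_sublinear_eq {E : Type*} [AddCommGroup E] [Module ℝ E] (N : E → ℝ)
    (N_hom : ∀ c : ℝ, 0 < c → ∀ x, N (c • x) = c * N x) (N_add : ∀ x y, N (x + y) ≤ N x + N y)
    (v : E) : ∃ g : E →ₗ[ℝ] ℝ, (∀ x, g x ≤ N x) ∧ g v = N v := by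
  have N_zero : N 0 = 0 := by
    have h2 := N_hom 2 two_pos 0
    rw [smul_zero] at h2
    linarith
  have H : ∀ c : ℝ, c • v = 0 → c • N v = 0 := by
    intro c hc
    rcases smul_eq_zero.1 hc with rfl | rfl
    · exact zero_smul _ _
    · rw [N_zero, smul_zero]
  let f := LinearPMap.mkSpanSingleton' (σ := RingHom.id ℝ) v (N v) H
  have hdom : f.domain = Submodule.span ℝ {v} := LinearPMap.domain_mkSpanSingleton v (N v) H
  have hf : ∀ x : f.domain, f x ≤ N x := by
    rintro ⟨x, hx⟩
    obtain ⟨c, rfl⟩ := Submodule.mem_span_singleton.1 (hdom.le hx)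
    rw [LinearPMap.mkSpanSingleton'_apply, smul_eq_mul, RingHom.id_apply]
    change c * N v ≤ N (c • v)
    rcases lt_trichotomy c 0 with hc | rfl | hc
    · have := N_add (c • v) ((-c) • v)
      rw [← add_smul, add_neg_cancel, zero_smul, N_zero, N_hom (-c) (neg_pos.2 hc)] at this
      linarith
    · simp [N_zero]
    · rw [N_hom c hc]
  obtain ⟨g, hgf, hgN⟩ := exists_extension_of_le_sublinear f N N_hom N_add hf
  have hv : v ∈ f.domain := hdom.ge (Submodule.mem_span_singleton_self v)
  exact ⟨g, hgN, (hgf ⟨v, hv⟩).trans (LinearPMap.mkSpanSingleton'_apply_self v (N v) H hv)⟩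

section Sublinear

variable {X : Type*} [TopologicalSpace X] [AddCommGroup X] [Module ℝ X] {D : Set X}
  {φ : (X →L[ℝ] ℝ) → ℝ} (hne : D.Nonempty) (hcomp : IsCompact D) (hconv : Convex ℝ D)
  (φ_hom : ∀ c : ℝ, 0 < c → ∀ x', φ (c • x') = c * φ x')
  (φ_add : ∀ x' y', φ (x' + y') ≤ φ x' + φ y') (hφD : ∀ y', φ y' ≤ suppFn y' D)
include hne hcomp hconv φ_hom φ_add hφD

theorem exists_mem_forall_le_sublinear_eq (x₀' : X →L[ℝ] ℝ) :
    ∃ x ∈ D, (∀ y' : X →L[ℝ] ℝ, y' x ≤ φ y') ∧ x₀' x = φ x₀' := by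
  obtain ⟨g, hgφ, hgx⟩ := exists_linearMap_le_sublinear_eq φ φ_hom φ_add x₀'
  obtain ⟨x, hxD, hx⟩ :=
    exists_forall_eq_of_le_suppFn hne hcomp hconv g fun y' => (hgφ y').trans (hφD y')
  exact ⟨x, hxD, fun y' => (hx y').trans_le (hgφ y'), (hx x₀').trans hgx⟩

theorem exists_isCompact_convex_suppFn_eq :
    ∃ C : Set X, C.Nonempty ∧ IsCompact C ∧ Convex ℝ C ∧
      ∀ x' : X →L[ℝ] ℝ, suppFn x' C = φ x' := by
  have hsupp := exists_mem_forall_le_sublinear_eq hne hcomp hconv φ_hom φ_add hφD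
  let C := D ∩ ⋂ y' : X →L[ℝ] ℝ, {x | y' x ≤ φ y'}
  have hmemC {x : X} (hxD : x ∈ D) (hx : ∀ y' : X →L[ℝ] ℝ, y' x ≤ φ y') : x ∈ C :=
    ⟨hxD, mem_iInter.2 hx⟩
  have hCne : C.Nonempty := by
    obtain ⟨x, hxD, hx, -⟩ := hsupp 0
    exact ⟨x, hmemC hxD hx⟩
  have hCcomp : IsCompact C :=
    hcomp.inter_right (isClosed_iInter fun y' => isClosed_le y'.continuous continuous_const)
  refine ⟨C, hCne, hCcomp,
    hconv.inter (convex_iInter fun y' => convex_halfSpace_le y'.toLinearMap.isLinear _),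
    fun x' => le_antisymm (suppFn_le hCne fun x hx => mem_iInter.1 hx.2 x') ?_⟩
  obtain ⟨x, hxD, hx, hx'⟩ := hsupp x'
  exact hx' ▸ le_suppFn x'.continuous hCcomp (hmemC hxD hx)

end Sublinear

section SetIntegral

variable {α X : Type*} [MeasurableSpace α] {μ : Measure α} {s : Set α} [TopologicalSpace X]
  {G Γ : α → Set X} {f g : X → ℝ}

theorem integrableOn_suppFn_of_subset (hs : MeasurableSet s) (hf : Continuous f)
    (hG : ∀ t ∈ s, (G t).Nonempty ∧ IsCompact (G t)) (hΓ : ∀ t ∈ s, IsCompact (Γ t))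
    (hsub : ∀ t ∈ s, G t ⊆ Γ t)
    (hmeas : AEStronglyMeasurable (fun t => suppFn f (G t)) (μ.restrict s))
    (hΓf : IntegrableOn (fun t => suppFn f (Γ t)) s μ)
    (hΓf_neg : IntegrableOn (fun t => suppFn (-f) (Γ t)) s μ) :
    IntegrableOn (fun t => suppFn f (G t)) s μ := by
  refine (hΓf.abs.add hΓf_neg.abs).mono' hmeas ?_
  filter_upwards [ae_restrict_mem hs] with t ht
  have hup := suppFn_mono hf (hG t ht).1 (hΓ t ht) (hsub t ht)
  have hlow := neg_suppFn_neg_le_suppFn hf (hG t ht).1 (hG t ht).2 (hΓ t ht) (hsub t ht)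
  rw [Real.norm_eq_abs, abs_le]
  constructor <;> simp only [Pi.add_apply] <;>
    linarith [le_abs_self (suppFn f (Γ t)), le_abs_self (suppFn (-f) (Γ t)),
      abs_nonneg (suppFn f (Γ t)), abs_nonneg (suppFn (-f) (Γ t))]

theorem setIntegral_suppFn_add_le (hs : MeasurableSet s)
    (hG : ∀ t ∈ s, (G t).Nonempty ∧ IsCompact (G t)) (hf : Continuous f) (hg : Continuous g)
    (hfi : IntegrableOn (fun t => suppFn f (G t)) s μ)
    (hgi : IntegrableOn (fun t => suppFn g (G t)) s μ)
    (hfgi : IntegrableOn (fun t => suppFn (f + g) (G t)) s μ) :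
    ∫ t in s, suppFn (f + g) (G t) ∂μ ≤
      ∫ t in s, suppFn f (G t) ∂μ + ∫ t in s, suppFn g (G t) ∂μ := by
  rw [← integral_add hfi hgi]
  exact setIntegral_mono_on hfgi (hfi.add hgi) hs fun t ht =>
    suppFn_add_le hf hg (hG t ht).2 (hG t ht).1

theorem setIntegral_suppFn_mono_of_subset (hs : MeasurableSet s) (hf : Continuous f)
    (hG : ∀ t ∈ s, (G t).Nonempty) (hΓ : ∀ t ∈ s, IsCompact (Γ t))
    (hsub : ∀ t ∈ s, G t ⊆ Γ t) (hGf : IntegrableOn (fun t => suppFn f (G t)) s μ)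
    (hΓf : IntegrableOn (fun t => suppFn f (Γ t)) s μ) :
    ∫ t in s, suppFn f (G t) ∂μ ≤ ∫ t in s, suppFn f (Γ t) ∂μ :=
  setIntegral_mono_on hGf hΓf hs fun t ht => suppFn_mono hf (hG t ht) (hΓ t ht) (hsub t ht)

end SetIntegral

theorem stmt13_general {X : Type*} [AddCommGroup X] [Module ℝ X] [UniformSpace X]
    [IsUniformAddGroup X] [ContinuousSMul ℝ X] [CompleteSpace X]
    (Γ : ℝ → Set X) (hΓ : ∀ t ∈ Set.Icc (0:ℝ) 1, IsCK (Γ t))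
    (hΓpet : PettisIntegrableCK Γ)
    (G : ℝ → Set X) (hG : ∀ t ∈ Set.Icc (0:ℝ) 1, IsCK (G t))
    (hGscal : ∀ x' : X →L[ℝ] ℝ, AEMeasurable (fun t => suppFn (⇑x') (G t)) μ01)
    (hsub : ∀ t ∈ Set.Icc (0:ℝ) 1, G t ⊆ Γ t) :
    PettisIntegrableCK G := by
  have hG' : ∀ t ∈ Icc (0 : ℝ) 1, (G t).Nonempty ∧ IsCompact (G t) :=
    fun t ht => ⟨(hG t ht).1, (hG t ht).2.1⟩
  have hint (x' : X →L[ℝ] ℝ) : IntegrableOn (fun t => suppFn x' (G t)) (Icc 0 1) :=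
    integrableOn_suppFn_of_subset measurableSet_Icc x'.continuous hG'
      (fun t ht => (hΓ t ht).2.1) hsub (hGscal x').aestronglyMeasurable (hΓpet.1 x')
      (by simpa using hΓpet.1 (-x'))
  refine ⟨hint, fun E hE hEm => ?_⟩
  obtain ⟨D, ⟨hDne, hDcomp, hDconv⟩, hD⟩ := hΓpet.2 E hE hEm
  have hintE (x' : X →L[ℝ] ℝ) : IntegrableOn (fun t => suppFn x' (G t)) E :=
    (hint x').mono_set hE
  obtain ⟨C, hCne, hCcomp, hCconv, hC⟩ := exists_isCompact_convex_suppFn_eq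
    (φ := fun x' => ∫ t in E, suppFn x' (G t)) hDne hDcomp hDconv
    (fun c hc x' => by
      simp only [FunLike.coe_smul, suppFn_smul_s13 hc.le]
      exact integral_const_mul c _)
    (fun x' y' => by
      simpa only [FunLike.coe_add] using
        setIntegral_suppFn_add_le hEm (fun t ht => hG' t (hE ht)) x'.continuous y'.continuous
          (hintE x') (hintE y') (by simpa using hintE (x' + y')))
    (fun y' => hD y' ▸ setIntegral_suppFn_mono_of_subset hEm y'.continuous
      (fun t ht => (hG t (hE ht)).1) (fun t ht => (hΓ t (hE ht)).2.1) (fun t ht => hsub t (hE ht))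
      (hintE y') ((hΓpet.1 y').mono_set hE))
  exact ⟨C, ⟨hCne, hCcomp, hCconv⟩, hC⟩

/-- if `Γ : [0,1] → ck(X)` is Pettis integrable in `ck(X)` and
`G : [0,1] → ck(X)` is scalarly measurable with `G t ⊆ Γ t` for all `t`, then `G` is
Pettis integrable in `ck(X)`. -/
theorem stmt13 {X : Type*} [AddCommGroup X] [Module ℝ X] [UniformSpace X]
    [IsUniformAddGroup X] [ContinuousSMul ℝ X] [CompleteSpace X]
    (p : ℕ → Seminorm ℝ X) (hp : WithSeminorms p) (hpmono : Monotone p)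
    (Γ : ℝ → Set X) (hΓ : ∀ t ∈ Set.Icc (0:ℝ) 1, IsCK (Γ t))
    (hΓpet : PettisIntegrableCK Γ)
    (G : ℝ → Set X) (hG : ∀ t ∈ Set.Icc (0:ℝ) 1, IsCK (G t))
    (hGscal : ∀ x' : X →L[ℝ] ℝ, AEMeasurable (fun t => suppFn (⇑x') (G t)) μ01)
    (hsub : ∀ t ∈ Set.Icc (0:ℝ) 1, G t ⊆ Γ t) :
    PettisIntegrableCK G :=
  stmt13_general Γ hΓ hΓpet G hG hGscal hsub
end

section
/- Let X be a Fréchet space and Γ: [0,1] → ck(X) Pettis integrable in ck(X). Then every scalarly measurable selection f of Γ (f(t) ∈ Γ(t) a.e.) is Pettis integrable. -/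
open MeasureTheory Set Filter Topology Pointwise

/-!
Pointwise, `-σ(-x', Γ t) ≤ x' (f t) ≤ σ(x', Γ t)`, which gives integrability of `x' ∘ f`, and
integrating over `E` shows that `x' ↦ ∫_E x' ∘ f` is a linear functional on the dual dominated
by the support function of the Pettis integral `C` of `Γ` over `E`. Such a functional is
evaluation at a point of `C`: for finitely many functionals this is separation in `ℝⁿ` from the
compact convex image of `C`, and compactness of `C` passes to all functionals at once.
-/

section SupportFunction

variable {X : Type*} [AddCommGroup X] [Module ℝ X] [TopologicalSpace X]

theorem apply_le_suppFn {C : Set X} (hC : IsCompact C) (x' : X →L[ℝ] ℝ) {x : X} (hx : x ∈ C) :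
    x' x ≤ suppFn x' C :=
  le_csSup (hC.image x'.continuous).bddAbove ⟨x, hx, rfl⟩

theorem abs_apply_le_max_suppFn {C : Set X} (hC : IsCompact C) (x' : X →L[ℝ] ℝ) {x : X}
    (hx : x ∈ C) : |x' x| ≤ max (suppFn x' C) (suppFn ⇑(-x') C) := by
  have h₁ := apply_le_suppFn hC x' hx
  have h₂ := apply_le_suppFn hC (-x') hx
  rw [neg_apply] at h₂
  exact abs_le.2 ⟨by linarith [le_max_right (suppFn x' C) (suppFn ⇑(-x') C)],
    h₁.trans (le_max_left _ _)⟩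

theorem exists_mem_forall_mem_apply_eq_of_le_suppFn {C : Set X} (hC : IsCompact C)
    (hCconv : Convex ℝ C) (hCne : C.Nonempty) (L : (X →L[ℝ] ℝ) →ₗ[ℝ] ℝ)
    (hL : ∀ x', L x' ≤ suppFn x' C) (u : Finset (X →L[ℝ] ℝ)) :
    ∃ x ∈ C, ∀ x' ∈ u, x' x = L x' := by
  classical
  let T : X →L[ℝ] (u → ℝ) := ContinuousLinearMap.pi fun i => (i : X →L[ℝ] ℝ)
  let v : u → ℝ := fun i => L i
  suffices hv : v ∈ T '' C by
    obtain ⟨x, hx, hTx⟩ := hv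
    exact ⟨x, hx, fun x' hx' => congrFun hTx ⟨x', hx'⟩⟩
  by_contra hv
  obtain ⟨φ, r, hφC, hφv⟩ := geometric_hahn_banach_closed_point
    (hCconv.linear_image (T : X →ₗ[ℝ] (u → ℝ))) (hC.image T.continuous).isClosed hv
  let e : u → u → ℝ := fun i j => if i = j then 1 else 0
  have hφ (y : u → ℝ) : φ y = ∑ i, y i • φ (e i) :=
    LinearMap.pi_apply_eq_sum_univ φ.toLinearMap y
  have hLz : L (φ.comp T) = φ v := by
    have hz : φ.comp T = ∑ i, φ (e i) • (i : X →L[ℝ] ℝ) := by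
      ext x
      rw [ContinuousLinearMap.comp_apply, hφ (T x)]
      simp [T, mul_comm]
    simp [hz, hφ v, v, mul_comm]
  have hsupp : suppFn (φ.comp T) C ≤ r :=
    csSup_le (hCne.image _) <| by
      rintro _ ⟨x, hx, rfl⟩
      exact (hφC (T x) ⟨x, hx, rfl⟩).le
  linarith [hL (φ.comp T)]

theorem exists_mem_forall_apply_eq_of_le_suppFn {C : Set X} (hC : IsCompact C)
    (hCconv : Convex ℝ C) (hCne : C.Nonempty) (L : (X →L[ℝ] ℝ) →ₗ[ℝ] ℝ)
    (hL : ∀ x', L x' ≤ suppFn x' C) : ∃ x ∈ C, ∀ x', x' x = L x' := by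
  obtain ⟨x, hx, hxL⟩ := hC.inter_iInter_nonempty (fun x' => {x | x' x = L x'})
    (fun x' => isClosed_eq x'.continuous continuous_const) fun u => by
      obtain ⟨x, hx, hxu⟩ := exists_mem_forall_mem_apply_eq_of_le_suppFn hC hCconv hCne L hL u
      exact ⟨x, hx, Set.mem_iInter₂.2 hxu⟩
  exact ⟨x, hx, Set.mem_iInter.1 hxL⟩

end SupportFunction

section ScalarIntegral

variable {α X : Type*} [MeasurableSpace α] [AddCommGroup X] [Module ℝ X] [TopologicalSpace X]
  {μ : Measure α} {Γ : α → Set X} {f : α → X}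

theorem integrable_apply_of_ae_mem (hΓ : ∀ᵐ t ∂μ, IsCompact (Γ t)) (hf : ∀ᵐ t ∂μ, f t ∈ Γ t)
    (x' : X →L[ℝ] ℝ) (hmeas : AEStronglyMeasurable (fun t => x' (f t)) μ)
    (hpos : Integrable (fun t => suppFn x' (Γ t)) μ)
    (hneg : Integrable (fun t => suppFn ⇑(-x') (Γ t)) μ) :
    Integrable (fun t => x' (f t)) μ :=
  (hpos.sup hneg).mono' hmeas <| by
    filter_upwards [hΓ, hf] with t hΓt hft
    exact abs_apply_le_max_suppFn hΓt x' hft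

theorem integral_apply_le_integral_suppFn (hΓ : ∀ᵐ t ∂μ, IsCompact (Γ t))
    (hf : ∀ᵐ t ∂μ, f t ∈ Γ t) (x' : X →L[ℝ] ℝ) (hint : Integrable (fun t => x' (f t)) μ)
    (hsupp : Integrable (fun t => suppFn x' (Γ t)) μ) :
    ∫ t, x' (f t) ∂μ ≤ ∫ t, suppFn x' (Γ t) ∂μ :=
  integral_mono_ae hint hsupp <| by
    filter_upwards [hΓ, hf] with t hΓt hft
    exact apply_le_suppFn hΓt x' hft

variable (μ f) in
noncomputable def scalarIntegral (hf : ∀ x' : X →L[ℝ] ℝ, Integrable (fun t => x' (f t)) μ) :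
    (X →L[ℝ] ℝ) →ₗ[ℝ] ℝ where
  toFun x' := ∫ t, x' (f t) ∂μ
  map_add' x' y' := integral_add (hf x') (hf y')
  map_smul' c _ := integral_const_mul c _

end ScalarIntegral

theorem stmt14_general {X : Type*} [AddCommGroup X] [Module ℝ X] [UniformSpace X]
    (Γ : ℝ → Set X) (hΓ : ∀ t ∈ Set.Icc (0:ℝ) 1, IsCK (Γ t))
    (hΓpet : PettisIntegrableCK Γ)
    (f : ℝ → X) (hsel : ∀ᵐ t ∂μ01, f t ∈ Γ t)
    (hscal : ∀ x' : X →L[ℝ] ℝ, AEMeasurable (fun t => x' (f t)) μ01) :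
    (∀ x' : X →L[ℝ] ℝ, MeasureTheory.IntegrableOn
        (fun t => x' (f t)) (Set.Icc 0 1) volume) ∧
    ∀ E ⊆ Set.Icc (0:ℝ) 1, MeasurableSet E →
      ∃ xE : X, ∀ x' : X →L[ℝ] ℝ, x' xE = ∫ t in E, x' (f t) := by
  have hμ01 {E : Set ℝ} (hE : E ⊆ Icc 0 1) (hEm : MeasurableSet E) :
      μ01.restrict E = volume.restrict E := by
    rw [μ01, Measure.restrict_restrict hEm, inter_eq_left.2 hE]
  have hcpt {E : Set ℝ} (hE : E ⊆ Icc 0 1) (hEm : MeasurableSet E) :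
      ∀ᵐ t ∂volume.restrict E, IsCompact (Γ t) := by
    filter_upwards [ae_restrict_mem hEm] with t ht using (hΓ t (hE ht)).2.1
  have hselE {E : Set ℝ} (hE : E ⊆ Icc 0 1) (hEm : MeasurableSet E) :
      ∀ᵐ t ∂volume.restrict E, f t ∈ Γ t :=
    hμ01 hE hEm ▸ ae_restrict_of_ae hsel
  have hint {E : Set ℝ} (hE : E ⊆ Icc 0 1) (hEm : MeasurableSet E) (x' : X →L[ℝ] ℝ) :
      IntegrableOn (fun t => x' (f t)) E :=
    integrable_apply_of_ae_mem (hcpt hE hEm) (hselE hE hEm) x'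
      (hμ01 hE hEm ▸ ((hscal x').restrict).aestronglyMeasurable)
      ((hΓpet.1 x').mono_set hE) ((hΓpet.1 (-x')).mono_set hE)
  refine ⟨hint subset_rfl measurableSet_Icc, fun E hE hEm => ?_⟩
  obtain ⟨C, ⟨hCne, hCcpt, hCconv⟩, hC⟩ := hΓpet.2 E hE hEm
  obtain ⟨x, -, hx⟩ := exists_mem_forall_apply_eq_of_le_suppFn hCcpt hCconv hCne
    (scalarIntegral (volume.restrict E) f (hint hE hEm)) fun x' =>
      (hC x').symm ▸ integral_apply_le_integral_suppFn (hcpt hE hEm) (hselE hE hEm) x'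
        (hint hE hEm x') ((hΓpet.1 x').mono_set hE)
  exact ⟨x, hx⟩

/-- every scalarly measurable selection of a multifunction that is Pettis
integrable in `ck(X)` is Pettis integrable. -/
theorem stmt14 {X : Type*} [AddCommGroup X] [Module ℝ X] [UniformSpace X]
    [IsUniformAddGroup X] [ContinuousSMul ℝ X] [CompleteSpace X]
    (p : ℕ → Seminorm ℝ X) (hp : WithSeminorms p) (hpmono : Monotone p)
    (Γ : ℝ → Set X) (hΓ : ∀ t ∈ Set.Icc (0:ℝ) 1, IsCK (Γ t))
    (hΓpet : PettisIntegrableCK Γ)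
    (f : ℝ → X) (hsel : ∀ᵐ t ∂μ01, f t ∈ Γ t)
    (hscal : ∀ x' : X →L[ℝ] ℝ, AEMeasurable (fun t => x' (f t)) μ01) :
    (∀ x' : X →L[ℝ] ℝ, MeasureTheory.IntegrableOn
        (fun t => x' (f t)) (Set.Icc 0 1) volume) ∧
    ∀ E ⊆ Set.Icc (0:ℝ) 1, MeasurableSet E →
      ∃ xE : X, ∀ x' : X →L[ℝ] ℝ, x' xE = ∫ t in E, x' (f t) :=
  stmt14_general Γ hΓ hΓpet f hsel hscal
end

section
/- Let X be a Fréchet space, x* ∈ X*, and Γ: [0,1] → ck(X) a scalarly measurable multifunction with nonempty compact convex values. Define G(t) = {x ∈ Γ(t) : ⟨x*, x⟩ = σ(x*, Γ(t))}. Then G(t) is a nonempty compact convex subset of X for each t, and G is scalarly measurable. -/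
open MeasureTheory Set Filter Topology Pointwise

/-! The support function of the exposed face `G t` is a countable infimum of support functions
of `Γ t`: `σ(y*, G t) = inf_n (σ(n x* + y*, Γ t) - n σ(x*, Γ t))`, hence measurable in `t`.
The inequality `≤` is immediate; for `≥`, the maximizers of `n x* + y*` on the compact set `Γ t`
accumulate at a point of the face at which `y*` is at least the infimum. -/

def face {X : Type*} (f : X → ℝ) (C : Set X) : Set X := {x ∈ C | f x = suppFn f C}

theorem IsCompact.inter_iInter_nonempty_of_antitone {X : Type*} [TopologicalSpace X] {C : Set X}
    (hC : IsCompact C) {t : ℕ → Set X} (hcl : ∀ n, IsClosed (t n)) (hanti : Antitone t)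
    (hne : ∀ n, (C ∩ t n).Nonempty) : (C ∩ ⋂ n, t n).Nonempty :=
  hC.inter_iInter_nonempty t hcl fun u => (hne (u.sup id)).mono <|
    inter_subset_inter_right _ <| subset_iInter₂ fun _ hn => hanti (Finset.le_sup (f := id) hn)

theorem eq_zero_of_forall_le_add_nat_mul {a b c : ℝ} (ha : a ≤ 0) (h : ∀ n : ℕ, c ≤ b + n * a) :
    a = 0 := by
  by_contra ha0
  have ha' : a < 0 := lt_of_le_of_ne ha ha0
  obtain ⟨n, hn⟩ := exists_nat_gt ((b - c) / -a)
  have := h n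
  rw [div_lt_iff₀ (neg_pos.2 ha')] at hn
  linarith

section Face

variable {X : Type*} [TopologicalSpace X] {C : Set X} {f g : X → ℝ}

theorem le_suppFn_of_mem (hC : IsCompact C) (hf : Continuous f) {x : X} (hx : x ∈ C) :
    f x ≤ suppFn f C :=
  le_csSup (hC.image hf).bddAbove (mem_image_of_mem f hx)

theorem IsCompact.exists_suppFn_eq (hC : IsCompact C) (hne : C.Nonempty) (hf : Continuous f) :
    ∃ x ∈ C, suppFn f C = f x :=
  hC.exists_sSup_image_eq hne hf.continuousOn

theorem face_nonempty (hC : IsCompact C) (hne : C.Nonempty) (hf : Continuous f) :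
    (face f C).Nonempty :=
  let ⟨x, hx, hfx⟩ := hC.exists_suppFn_eq hne hf
  ⟨x, hx, hfx.symm⟩

theorem isCompact_face (hC : IsCompact C) (hf : Continuous f) : IsCompact (face f C) :=
  hC.inter_right (isClosed_eq hf continuous_const)

theorem suppFn_face_eq_iInf (hC : IsCompact C) (hne : C.Nonempty) (hf : Continuous f)
    (hg : Continuous g) :
    suppFn g (face f C) = ⨅ n : ℕ, (suppFn (n • f + g) C - n * suppFn f C) := by
  set s := suppFn f C
  have hpen : ∀ n : ℕ, Continuous (n • f + g) := fun n => (hf.const_smul n).add hg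
  have hpen_apply : ∀ (n : ℕ) x, (n • f + g) x = n * f x + g x := fun n x => by
    rw [Pi.add_apply, Pi.smul_apply, nsmul_eq_mul]
  have hle : ∀ n : ℕ, suppFn g (face f C) ≤ suppFn (n • f + g) C - n * s := by
    intro n
    refine csSup_le ((face_nonempty hC hne hf).image g) ?_
    rintro _ ⟨x, ⟨hxC, hxs⟩, rfl⟩
    have := le_suppFn_of_mem hC (hpen n) hxC
    rw [hpen_apply, hxs] at this
    linarith
  refine le_antisymm (le_ciInf hle) ?_
  set L := ⨅ n : ℕ, (suppFn (n • f + g) C - n * s)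
  have hL : ∀ n : ℕ, L ≤ suppFn (n • f + g) C - n * s :=
    ciInf_le ⟨suppFn g (face f C), forall_mem_range.2 hle⟩
  let t : ℕ → Set X := fun n => {x | f x ≤ s} ∩ {x | L ≤ g x + n * (f x - s)}
  have hcl : ∀ n, IsClosed (t n) := fun n =>
    (isClosed_le hf continuous_const).inter
      (isClosed_le continuous_const (hg.add (continuous_const.mul (hf.sub continuous_const))))
  have hanti : Antitone t := fun m n hmn x ⟨hxs, hxL⟩ =>
    ⟨hxs, show L ≤ g x + m * (f x - s) from hxL.trans <| add_le_add le_rfl <|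
      mul_le_mul_of_nonpos_right (Nat.cast_le.2 hmn) (sub_nonpos.2 hxs)⟩
  have hmax : ∀ n, (C ∩ t n).Nonempty := by
    intro n
    obtain ⟨x, hx, hval⟩ := hC.exists_suppFn_eq hne (hpen n)
    have := hL n
    rw [hval, hpen_apply] at this
    exact ⟨x, hx, le_suppFn_of_mem hC hf hx, show L ≤ g x + n * (f x - s) by linarith⟩
  obtain ⟨x, hxC, hxI⟩ := hC.inter_iInter_nonempty_of_antitone hcl hanti hmax
  have hxt : ∀ n, x ∈ t n := mem_iInter.1 hxI
  have hxs : f x = s := by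
    linarith [eq_zero_of_forall_le_add_nat_mul (sub_nonpos.2 (hxt 0).1) fun n => (hxt n).2]
  calc L ≤ g x := by simpa using (hxt 0).2
    _ ≤ suppFn g (face f C) :=
      le_suppFn_of_mem (isCompact_face hC hf) hg ⟨hxC, hxs⟩

end Face

section Linear

variable {X : Type*} [AddCommGroup X] [Module ℝ X] [UniformSpace X]

theorem isCK_face {C : Set X} (hC : IsCK C) (x' : X →L[ℝ] ℝ) : IsCK (face x' C) :=
  ⟨face_nonempty hC.2.1 hC.1 x'.continuous, isCompact_face hC.2.1 x'.continuous,
    hC.2.2.inter (convex_hyperplane x'.isLinear _)⟩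

theorem suppFn_face_eq_iInf_of_isCK {C : Set X} (hC : IsCK C) (x' y' : X →L[ℝ] ℝ) :
    suppFn y' (face x' C) = ⨅ n : ℕ, (suppFn ⇑(n • x' + y') C - n * suppFn x' C) := by
  simpa only [FunLike.coe_add, FunLike.coe_smul] using
    suppFn_face_eq_iInf hC.2.1 hC.1 x'.continuous y'.continuous

end Linear

theorem stmt17_general {X : Type*} [AddCommGroup X] [Module ℝ X] [UniformSpace X]
    (x' : X →L[ℝ] ℝ)
    (Γ : ℝ → Set X) (hΓ : ∀ t ∈ Set.Icc (0:ℝ) 1, IsCK (Γ t))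
    (hscal : ∀ y' : X →L[ℝ] ℝ, AEMeasurable (fun t => suppFn (⇑y') (Γ t)) μ01) :
    (∀ t ∈ Set.Icc (0:ℝ) 1, IsCK {x ∈ Γ t | x' x = suppFn (⇑x') (Γ t)}) ∧
    ∀ y' : X →L[ℝ] ℝ,
      AEMeasurable (fun t => suppFn (⇑y') {x ∈ Γ t | x' x = suppFn (⇑x') (Γ t)}) μ01 := by
  refine ⟨fun t ht => isCK_face (hΓ t ht) x', fun y' => ?_⟩
  have hinf : AEMeasurable
      (fun t => ⨅ n : ℕ, (suppFn ⇑(n • x' + y') (Γ t) - n * suppFn x' (Γ t))) μ01 :=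
    AEMeasurable.iInf fun n => (hscal (n • x' + y')).sub ((hscal x').const_mul n)
  refine hinf.congr ?_
  filter_upwards [ae_restrict_mem measurableSet_Icc] with t ht
  exact (suppFn_face_eq_iInf_of_isCK (hΓ t ht) x' y').symm

/-- for `x* ∈ X*` and a scalarly measurable `Γ : [0,1] → ck(X)`, the
face multifunction `G t = {x ∈ Γ t : ⟨x*, x⟩ = σ(x*, Γ t)}` has nonempty compact convex
values and is scalarly measurable. -/
theorem stmt17 {X : Type*} [AddCommGroup X] [Module ℝ X] [UniformSpace X]
    [IsUniformAddGroup X] [ContinuousSMul ℝ X] [CompleteSpace X]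
    (p : ℕ → Seminorm ℝ X) (hp : WithSeminorms p) (hpmono : Monotone p)
    (x' : X →L[ℝ] ℝ)
    (Γ : ℝ → Set X) (hΓ : ∀ t ∈ Set.Icc (0:ℝ) 1, IsCK (Γ t))
    (hscal : ∀ y' : X →L[ℝ] ℝ, AEMeasurable (fun t => suppFn (⇑y') (Γ t)) μ01) :
    (∀ t ∈ Set.Icc (0:ℝ) 1, IsCK {x ∈ Γ t | x' x = suppFn (⇑x') (Γ t)}) ∧
    ∀ y' : X →L[ℝ] ℝ,
      AEMeasurable (fun t => suppFn (⇑y') {x ∈ Γ t | x' x = suppFn (⇑x') (Γ t)}) μ01 :=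
  stmt17_general x' Γ hΓ hscal
end
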